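/- (Fatou's Lemma) Let (X, 𝒰, ∫) be a complete Daniell space and let (f_n) be a sequence of non-negative functions in 𝒰 such that ∫f_n ≤ M for some constant M and every n ∈ ℕ. If f : X → ℝ and f_n(x) → f(x) for all x outside a null set, then f ∈ 𝒰 and ∫f ≤ M. -/
import Mathlib


open Filter Topology

/-- A Daniell space: a Riesz space `U` of real-valued functions on `X` together with a
positive linear functional `integral` satisfying the Daniell continuity condition (II). -/
structure DaniellSpace (X : Type*) where
  U : Set (X → ℝ)
  integral : (X → ℝ) → ℝ
  zero_mem : (0 : X → ℝ) ∈ U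
  add_mem : ∀ {f g : X → ℝ}, f ∈ U → g ∈ U → f + g ∈ U
  smul_mem : ∀ (c : ℝ) {f : X → ℝ}, f ∈ U → c • f ∈ U
  sup_mem : ∀ {f g : X → ℝ}, f ∈ U → g ∈ U → f ⊔ g ∈ U
  inf_mem : ∀ {f g : X → ℝ}, f ∈ U → g ∈ U → f ⊓ g ∈ U
  integral_add : ∀ {f g : X → ℝ}, f ∈ U → g ∈ U →
    integral (f + g) = integral f + integral g
  integral_smul : ∀ (c : ℝ) {f : X → ℝ}, f ∈ U → integral (c • f) = c * integral f
  integral_nonneg : ∀ {f : X → ℝ}, f ∈ U → (∀ x, 0 ≤ f x) → 0 ≤ integral f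
  integral_tendsto_zero : ∀ f : ℕ → X → ℝ, (∀ n, f n ∈ U) → Antitone f →
    (∀ x, Tendsto (fun n => f n x) atTop (𝓝 (0 : ℝ))) →
    Tendsto (fun n => integral (f n)) atTop (𝓝 (0 : ℝ))

/-- `f ≃ ∑ fₙ` : the `fₙ` belong to `U`, `∑ ∫|fₙ| < ∞`, and `f x = ∑ fₙ x` at every
point where the series converges absolutely. -/
def DaniellSpace.Rep {X : Type*} (D : DaniellSpace X) (f : X → ℝ) (fs : ℕ → X → ℝ) : Prop :=
  (∀ n, fs n ∈ D.U) ∧ (Summable fun n => D.integral |fs n|) ∧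
  ∀ x, (Summable fun n => |fs n x|) → HasSum (fun n => fs n x) (f x)

/-- The extension `𝒰*` of `𝒰`. -/
def DaniellSpace.Ustar {X : Type*} (D : DaniellSpace X) : Set (X → ℝ) :=
  {f | ∃ fs, D.Rep f fs}

-- The integral on `𝒰*`: `∫ f = ∑ ∫ fₙ` for any representation `f ≃ ∑ fₙ`
-- (the value is independent of the representation).
open Classical in
noncomputable def DaniellSpace.integralStar {X : Type*} (D : DaniellSpace X)
    (f : X → ℝ) : ℝ :=
  if h : ∃ fs, D.Rep f fs then ∑' n, D.integral (h.choose n) else 0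

/-- A Daniell space is complete if `f ≃ ∑ fₙ` with all `fₙ ∈ 𝒰` implies `f ∈ 𝒰`. -/
def DaniellSpace.Complete {X : Type*} (D : DaniellSpace X) : Prop :=
  ∀ (f : X → ℝ) (fs : ℕ → X → ℝ), D.Rep f fs → f ∈ D.U

/-- A null set: its characteristic function is a null function. -/
def DaniellSpace.NullSet {X : Type*} (D : DaniellSpace X) (S : Set X) : Prop :=
  S.indicator (fun _ => (1 : ℝ)) ∈ D.U ∧ D.integral (S.indicator fun _ => (1 : ℝ)) = 0

namespace DaniellSpace

variable {X : Type*}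

lemma neg_mem (D : DaniellSpace X) {f : X → ℝ} (hf : f ∈ D.U) : -f ∈ D.U := by
  simpa using D.smul_mem (-1) hf

lemma sub_mem (D : DaniellSpace X) {f g : X → ℝ} (hf : f ∈ D.U) (hg : g ∈ D.U) :
    f - g ∈ D.U := by
  rw [sub_eq_add_neg]; exact D.add_mem hf (D.neg_mem hg)

lemma abs_mem (D : DaniellSpace X) {f : X → ℝ} (hf : f ∈ D.U) : |f| ∈ D.U := by
  have h : |f| = f ⊔ -f := by
    ext x; simp [Pi.abs_apply, Pi.sup_apply, abs_eq_max_neg]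
  rw [h]; exact D.sup_mem hf (D.neg_mem hf)

lemma integral_zero (D : DaniellSpace X) : D.integral 0 = 0 := by
  simpa using D.integral_smul 0 D.zero_mem

lemma integral_neg (D : DaniellSpace X) {f : X → ℝ} (hf : f ∈ D.U) :
    D.integral (-f) = -D.integral f := by
  simpa using D.integral_smul (-1) hf

lemma integral_sub (D : DaniellSpace X) {f g : X → ℝ} (hf : f ∈ D.U) (hg : g ∈ D.U) :
    D.integral (f - g) = D.integral f - D.integral g := by
  rw [sub_eq_add_neg, D.integral_add hf (D.neg_mem hg), D.integral_neg hg, sub_eq_add_neg]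

lemma integral_mono (D : DaniellSpace X) {f g : X → ℝ} (hf : f ∈ D.U) (hg : g ∈ D.U)
    (h : ∀ x, f x ≤ g x) : D.integral f ≤ D.integral g := by
  have h0 : 0 ≤ D.integral (g - f) := D.integral_nonneg (D.sub_mem hg hf)
    (fun x => by simpa using h x)
  rw [D.integral_sub hg hf] at h0; linarith

/-- In a complete Daniell space, the pointwise infimum of an antitone sequence of
nonnegative functions in `𝒰` is again in `𝒰`. -/
lemma iInf_mem (D : DaniellSpace X) (hD : D.Complete) (h : ℕ → X → ℝ)
    (hmem : ∀ p, h p ∈ D.U) (hanti : ∀ p x, h (p + 1) x ≤ h p x)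
    (hpos : ∀ p x, 0 ≤ h p x) : (fun x => ⨅ p, h p x) ∈ D.U := by
  have hbdd : ∀ x, BddBelow (Set.range fun p => h p x) :=
    fun x => ⟨0, by rintro y ⟨p, rfl⟩; exact hpos p x⟩
  have hax : ∀ x, Antitone fun p => h p x :=
    fun x => antitone_nat_of_succ_le (fun p => hanti p x)
  have htend : ∀ x, Filter.Tendsto (fun p => h p x) Filter.atTop (nhds (⨅ p, h p x)) :=
    fun x => tendsto_atTop_ciInf (hax x) (hbdd x)
  set r : ℕ → X → ℝ := fun p => match p with
    | 0 => h 0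
    | (p + 1) => h (p + 1) - h p with hr
  have hrmem : ∀ p, r p ∈ D.U := by
    rintro (_ | p); exacts [hmem 0, D.sub_mem (hmem (p + 1)) (hmem p)]
  have habs : ∀ p, |r (p + 1)| = h p - h (p + 1) := by
    intro p; ext x
    simp only [Pi.abs_apply, Pi.sub_apply, hr]
    rw [abs_of_nonpos (by linarith [hanti p x])]; ring
  have habs0 : |r 0| = h 0 := by
    ext x; simp only [Pi.abs_apply, hr]; exact abs_of_nonneg (hpos 0 x)
  have hpart : ∀ x m, ∑ i ∈ Finset.range (m + 1), r i x = h m x := by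
    intro x m
    induction m with
    | zero => simp [hr]
    | succ m ih => rw [Finset.sum_range_succ, ih]; simp [hr]
  refine hD _ r ⟨hrmem, ?_, ?_⟩
  · refine summable_of_sum_range_le (c := 2 * D.integral (h 0))
      (fun p => D.integral_nonneg (D.abs_mem (hrmem p)) (fun x => abs_nonneg _)) ?_
    intro m
    match m with
    | 0 =>
      simp only [Finset.range_zero, Finset.sum_empty]
      have := D.integral_nonneg (hmem 0) (hpos 0); linarith
    | (m + 1) =>
      rw [Finset.sum_range_succ']
      have heq : ∀ i, D.integral |r (i + 1)| = D.integral (h i) - D.integral (h (i + 1)) := by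
        intro i; rw [habs i, D.integral_sub (hmem i) (hmem (i + 1))]
      calc (∑ i ∈ Finset.range m, D.integral |r (i + 1)|) + D.integral |r 0|
          = (∑ i ∈ Finset.range m, (D.integral (h i) - D.integral (h (i + 1))))
              + D.integral (h 0) := by rw [habs0]; exact congrArg (· + _) (Finset.sum_congr rfl fun i _ => heq i)
        _ = (D.integral (h 0) - D.integral (h m)) + D.integral (h 0) := by
              rw [Finset.sum_range_sub' (fun i => D.integral (h i))]
        _ ≤ 2 * D.integral (h 0) := by
              have := D.integral_nonneg (hmem m) (hpos m); linarith
  · intro x hsx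
    have hsum : Summable fun p => r p x := hsx.of_abs
    rw [hsum.hasSum_iff_tendsto_nat]
    have : Filter.Tendsto (fun m => ∑ i ∈ Finset.range (m + 1), r i x) Filter.atTop
        (nhds (⨅ p, h p x)) := (htend x).congr (fun m => (hpart x m).symm)
    exact (Filter.tendsto_add_atTop_iff_nat 1).mp this

end DaniellSpace

section FinInf

variable {X : Type*}

/-- `dfInf fs n p = min (fs n, fs (n+1), ..., fs (n+p))`. -/
def dfInf (fs : ℕ → X → ℝ) (n : ℕ) : ℕ → X → ℝ
  | 0 => fs n
  | p + 1 => dfInf fs n p ⊓ fs (n + 1 + p)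

lemma dfInf_succ_apply (fs : ℕ → X → ℝ) (n p : ℕ) (x : X) :
    dfInf fs n (p + 1) x = min (dfInf fs n p x) (fs (n + 1 + p) x) := rfl

lemma dfInf_antitone (fs : ℕ → X → ℝ) (n p : ℕ) (x : X) :
    dfInf fs n (p + 1) x ≤ dfInf fs n p x := by
  rw [dfInf_succ_apply]; exact min_le_left _ _

lemma dfInf_nonneg (fs : ℕ → X → ℝ) (h : ∀ k x, 0 ≤ fs k x) (n p : ℕ) (x : X) :
    0 ≤ dfInf fs n p x := by
  induction p with
  | zero => exact h n x
  | succ p ih => rw [dfInf_succ_apply]; exact le_min ih (h _ x)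

lemma dfInf_le (fs : ℕ → X → ℝ) (n : ℕ) {j p : ℕ} (hj : j ≤ p) (x : X) :
    dfInf fs n p x ≤ fs (n + j) x := by
  induction p with
  | zero => obtain rfl : j = 0 := Nat.le_zero.mp hj; simp [dfInf]
  | succ p ih =>
    rw [dfInf_succ_apply]
    rcases Nat.lt_or_ge j (p + 1) with hlt | hge
    · exact le_trans (min_le_left _ _) (ih (Nat.lt_succ_iff.mp hlt))
    · obtain rfl : j = p + 1 := le_antisymm hj hge
      have : n + (p + 1) = n + 1 + p := by omega
      rw [this]; exact min_le_right _ _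

lemma dfInf_succ_left (fs : ℕ → X → ℝ) (n p : ℕ) (x : X) :
    dfInf fs n (p + 1) x = min (fs n x) (dfInf fs (n + 1) p x) := by
  induction p with
  | zero => simp [dfInf_succ_apply, dfInf]
  | succ p ih =>
    rw [dfInf_succ_apply, ih, min_assoc, dfInf_succ_apply]
    have : n + 1 + (p + 1) = n + 1 + 1 + p := by omega
    rw [this]

/-- `dsInf fs n x = ⨅_{k ≥ n} fs k x`. -/
noncomputable def dsInf (fs : ℕ → X → ℝ) (n : ℕ) : X → ℝ :=
  fun x => ⨅ p, dfInf fs n p x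

lemma dsInf_bddBelow (fs : ℕ → X → ℝ) (h : ∀ k x, 0 ≤ fs k x) (n : ℕ) (x : X) :
    BddBelow (Set.range fun p => dfInf fs n p x) :=
  ⟨0, by rintro y ⟨p, rfl⟩; exact dfInf_nonneg fs h n p x⟩

lemma dsInf_nonneg (fs : ℕ → X → ℝ) (h : ∀ k x, 0 ≤ fs k x) (n : ℕ) (x : X) :
    0 ≤ dsInf fs n x :=
  le_ciInf (fun p => dfInf_nonneg fs h n p x)

lemma dsInf_le (fs : ℕ → X → ℝ) (h : ∀ k x, 0 ≤ fs k x) (n j : ℕ) (x : X) :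
    dsInf fs n x ≤ fs (n + j) x :=
  le_trans (ciInf_le (dsInf_bddBelow fs h n x) j) (dfInf_le fs n le_rfl x)

lemma dsInf_mono (fs : ℕ → X → ℝ) (h : ∀ k x, 0 ≤ fs k x) (n : ℕ) (x : X) :
    dsInf fs n x ≤ dsInf fs (n + 1) x := by
  refine le_ciInf fun p => ?_
  calc dsInf fs n x ≤ dfInf fs n (p + 1) x := ciInf_le (dsInf_bddBelow fs h n x) (p + 1)
    _ ≤ dfInf fs (n + 1) p x := by rw [dfInf_succ_left]; exact min_le_right _ _

lemma dsInf_monotone (fs : ℕ → X → ℝ) (h : ∀ k x, 0 ≤ fs k x) (x : X) :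
    Monotone fun n => dsInf fs n x :=
  monotone_nat_of_le_succ (fun n => dsInf_mono fs h n x)

end FinInf

/-- Fatou's Lemma: in a complete Daniell space, if `fₙ ≥ 0`, `∫fₙ ≤ M`, and `fₙ → f`
a.e., then `f ∈ 𝒰` and `∫f ≤ M`. -/
theorem daniell_fatou {X : Type*} [Nonempty X] (D : DaniellSpace X)
    (hD : D.Complete) (fs : ℕ → X → ℝ) (f : X → ℝ) (hfs : ∀ n, fs n ∈ D.U)
    (hnonneg : ∀ n x, 0 ≤ fs n x) (M : ℝ) (hM : ∀ n, D.integral (fs n) ≤ M)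
    (hae : ∃ S : Set X, D.NullSet S ∧
      ∀ x ∉ S, Tendsto (fun n => fs n x) atTop (𝓝 (f x))) :
    f ∈ D.U ∧ D.integral f ≤ M := by
  obtain ⟨S, ⟨hχmem, hχint⟩, hS⟩ := hae
  set χ : X → ℝ := S.indicator (fun _ => (1 : ℝ)) with hχ
  have hχ_nonneg : ∀ x, 0 ≤ χ x := fun x => Set.indicator_nonneg (fun _ _ => zero_le_one) x
  have hχS : ∀ x ∈ S, χ x = 1 := fun x hx => Set.indicator_of_mem hx _
  have hχnS : ∀ x ∉ S, χ x = 0 := fun x hx => Set.indicator_of_notMem hx _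
  set g : ℕ → X → ℝ := dsInf fs with hg
  have hfmem : ∀ n p, dfInf fs n p ∈ D.U := by
    intro n p
    induction p with
    | zero => exact hfs n
    | succ p ih => exact D.inf_mem ih (hfs _)
  have hgmem : ∀ n, g n ∈ D.U := fun n =>
    D.iInf_mem hD (dfInf fs n) (hfmem n) (fun p x => dfInf_antitone fs n p x)
      (fun p x => dfInf_nonneg fs hnonneg n p x)
  have hg_nonneg : ∀ n x, 0 ≤ g n x := fun n x => dsInf_nonneg fs hnonneg n x
  have hg_le : ∀ n x, g n x ≤ fs n x := fun n x => by
    simpa using dsInf_le fs hnonneg n 0 x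
  have hg_mono_x : ∀ x, Monotone fun n => g n x := fun x => dsInf_monotone fs hnonneg x
  have hgint_nonneg : ∀ n, 0 ≤ D.integral (g n) := fun n =>
    D.integral_nonneg (hgmem n) (hg_nonneg n)
  have hgintM : ∀ n, D.integral (g n) ≤ M := fun n =>
    le_trans (D.integral_mono (hgmem n) (hfs n) (hg_le n)) (hM n)
  -- convergence of `g n x` to `f x` off `S`
  have htendg : ∀ x ∉ S, Tendsto (fun n => g n x) atTop (𝓝 (f x)) := by
    intro x hx
    rw [Metric.tendsto_atTop]
    intro ε hε
    obtain ⟨N, hN⟩ := Metric.tendsto_atTop.1 (hS x hx) (ε / 2) (by linarith)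
    refine ⟨N, fun n hn => ?_⟩
    have hfs_lb : ∀ k, n ≤ k → f x - ε / 2 ≤ fs k x := by
      intro k hk
      have h' := hN k (le_trans hn hk)
      rw [Real.dist_eq, abs_lt] at h'
      linarith [h'.1]
    have hup : g n x ≤ fs n x := hg_le n x
    have hlow : f x - ε / 2 ≤ g n x := by
      refine le_ciInf fun p => ?_
      induction p with
      | zero => exact hfs_lb n le_rfl
      | succ p ih => rw [dfInf_succ_apply]; exact le_min ih (hfs_lb _ (by omega))
    have hupε : fs n x < f x + ε / 2 := by
      have h' := hN n hn; rw [Real.dist_eq, abs_lt] at h'; linarith [h'.2]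
    rw [Real.dist_eq, abs_lt]
    constructor <;> linarith
  -- the representation of `f`
  set r : ℕ → X → ℝ := fun n => Nat.casesOn n (g 0) (fun k => (g (k + 1) - g k) + χ)
    with hrdef
  have hr0 : r 0 = g 0 := rfl
  have hrs : ∀ k, r (k + 1) = (g (k + 1) - g k) + χ := fun k => rfl
  have hrsx : ∀ k x, r (k + 1) x = (g (k + 1) x - g k x) + χ x := fun k x => rfl
  have hrmem : ∀ n, r n ∈ D.U := by
    rintro (_ | k)
    exacts [hgmem 0, D.add_mem (D.sub_mem (hgmem _) (hgmem _)) hχmem]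
  have hr_nonneg : ∀ n x, 0 ≤ r n x := by
    rintro (_ | k) x
    · exact hg_nonneg 0 x
    · have h1 := hg_mono_x x (Nat.le_succ k)
      have h2 := hχ_nonneg x
      rw [hrsx]; linarith
  have habs : ∀ n, |r n| = r n := fun n => funext fun x => abs_of_nonneg (hr_nonneg n x)
  have hrint : ∀ k, D.integral (r (k + 1)) = D.integral (g (k + 1)) - D.integral (g k) := by
    intro k
    rw [hrs, D.integral_add (D.sub_mem (hgmem _) (hgmem _)) hχmem, hχint, add_zero,
      D.integral_sub (hgmem _) (hgmem _)]
  have hM0 : 0 ≤ M := le_trans (D.integral_nonneg (hfs 0) (hnonneg 0)) (hM 0)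
  have hsummable : Summable fun n => D.integral |r n| := by
    refine summable_of_sum_range_le (c := M)
      (fun n => D.integral_nonneg (D.abs_mem (hrmem n)) fun x => abs_nonneg _) ?_
    intro m
    match m with
    | 0 => simpa using hM0
    | (m + 1) =>
      rw [Finset.sum_range_succ']
      calc (∑ i ∈ Finset.range m, D.integral |r (i + 1)|) + D.integral |r 0|
          = (∑ i ∈ Finset.range m,
              (D.integral (g (i + 1)) - D.integral (g i))) + D.integral (g 0) := by
            exact congrArg₂ (· + ·)
              (Finset.sum_congr rfl fun i _ =>
                (congrArg D.integral (habs (i + 1))).trans (hrint i))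
              (congrArg D.integral ((habs 0).trans hr0))
        _ = (D.integral (g m) - D.integral (g 0)) + D.integral (g 0) := by
            rw [Finset.sum_range_sub (fun i => D.integral (g i))]
        _ ≤ M := by rw [sub_add_cancel]; exact hgintM m
  have hpart : ∀ x, χ x = 0 → ∀ m, ∑ i ∈ Finset.range (m + 1), r i x = g m x := by
    intro x hx m
    induction m with
    | zero => simp [hr0]
    | succ m ih => rw [Finset.sum_range_succ, ih, hrsx, hx]; ring
  have hrep3 : ∀ x, (Summable fun n => |r n x|) → HasSum (fun n => r n x) (f x) := by
    intro x hsx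
    have hxS : x ∉ S := by
      intro hxS
      have h1 : ∀ k, (1 : ℝ) ≤ |r (k + 1) x| := by
        intro k
        have hmx := hg_mono_x x (Nat.le_succ k)
        rw [hrsx, hχS x hxS, abs_of_nonneg (by linarith)]
        linarith
      have h2 : Tendsto (fun k => |r (k + 1) x|) atTop (𝓝 0) :=
        hsx.tendsto_atTop_zero.comp (tendsto_add_atTop_nat 1)
      have h3 : ∀ᶠ k in atTop, |r (k + 1) x| < 1 :=
        h2.eventually (eventually_lt_nhds zero_lt_one)
      obtain ⟨k, hk⟩ := h3.exists
      linarith [h1 k]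
    have hsum : Summable fun n => r n x := hsx.of_abs
    rw [hsum.hasSum_iff_tendsto_nat]
    have h4 : Tendsto (fun m => ∑ i ∈ Finset.range (m + 1), r i x) atTop (𝓝 (f x)) :=
      (htendg x hxS).congr (fun m => (hpart x (hχnS x hxS) m).symm)
    exact (tendsto_add_atTop_iff_nat 1).mp h4
  have hfU : f ∈ D.U := hD f r ⟨hrmem, hsummable, hrep3⟩
  refine ⟨hfU, ?_⟩
  -- the sequence `e n = (f - g n - n • χ) ⊔ 0` decreases to `0`
  set e : ℕ → X → ℝ := fun n => (f - g n - (n : ℝ) • χ) ⊔ 0 with he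
  have hdmem : ∀ n, f - g n - (n : ℝ) • χ ∈ D.U := fun n =>
    D.sub_mem (D.sub_mem hfU (hgmem n)) (D.smul_mem _ hχmem)
  have hemem : ∀ n, e n ∈ D.U := fun n => D.sup_mem (hdmem n) D.zero_mem
  have hex : ∀ n x, e n x = max (f x - g n x - (n : ℝ) * χ x) 0 := fun n x => rfl
  have heanti : Antitone e := by
    intro n m hnm
    rw [Pi.le_def]
    intro x
    rw [hex, hex]
    refine max_le_max ?_ le_rfl
    have h1 : g n x ≤ g m x := hg_mono_x x hnm
    have h2 : (n : ℝ) * χ x ≤ (m : ℝ) * χ x :=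
      mul_le_mul_of_nonneg_right (Nat.cast_le.2 hnm) (hχ_nonneg x)
    linarith
  have hetend : ∀ x, Tendsto (fun n => e n x) atTop (𝓝 0) := by
    intro x
    by_cases hxS : x ∈ S
    · have hc : χ x = 1 := hχS x hxS
      have hev : (fun n => e n x) =ᶠ[atTop] (fun _ => (0 : ℝ)) := by
        rw [Filter.eventuallyEq_iff_exists_mem]
        refine ⟨{n | ⌈f x - g 0 x⌉₊ ≤ n}, Filter.mem_atTop _, fun n hn => ?_⟩
        have h1 : g 0 x ≤ g n x := hg_mono_x x (Nat.zero_le n)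
        have h2 : f x - g 0 x ≤ (n : ℝ) :=
          le_trans (Nat.le_ceil _) (Nat.cast_le.2 hn)
        show e n x = 0
        rw [hex, hc]
        exact max_eq_right (by linarith)
      exact Tendsto.congr' hev.symm tendsto_const_nhds
    · have hc : χ x = 0 := hχnS x hxS
      have hd : Tendsto (fun n => f x - g n x) atTop (𝓝 0) := by
        have h' := (tendsto_const_nhds (x := f x) (f := atTop)).sub (htendg x hxS)
        simpa using h'
      have h5 : Tendsto (fun n => max (f x - g n x) 0) atTop (𝓝 0) := by
        have := hd.max (tendsto_const_nhds (x := (0 : ℝ)) (f := atTop))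
        simpa using this
      exact h5.congr fun n => by rw [hex, hc]; norm_num
  have heint : Tendsto (fun n => D.integral (e n)) atTop (𝓝 0) :=
    D.integral_tendsto_zero e hemem heanti hetend
  have hbound : ∀ n, D.integral f ≤ M + D.integral (e n) := by
    intro n
    have h1 : D.integral (f - g n - (n : ℝ) • χ) ≤ D.integral (e n) :=
      D.integral_mono (hdmem n) (hemem n) (fun x => by rw [hex]; exact le_max_left _ _)
    have h2 : D.integral (f - g n - (n : ℝ) • χ) = D.integral f - D.integral (g n) := by
      rw [D.integral_sub (D.sub_mem hfU (hgmem n)) (D.smul_mem _ hχmem),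
        D.integral_sub hfU (hgmem n), D.integral_smul _ hχmem, hχint, mul_zero, sub_zero]
    have h3 := hgintM n
    linarith
  have hfin : Tendsto (fun n => M + D.integral (e n)) atTop (𝓝 M) := by
    have := (tendsto_const_nhds (x := M) (f := atTop)).add heint
    simpa using this
  exact ge_of_tendsto' hfin hbound
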